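/- arXiv:2102.11767 — 3 statements merged into one kernel-verified Lean document; each statement's English description precedes it below -/
import Mathlib

section
/- Every ring automorphism-composed-with-translation (affine symmetry) of the dual numbers Z/12[ε] that leaves the fiber z + (Z/12)ε invariant and maps K[ε] onto D[ε] equals p^z[ε] := e^z ∘ (e^{2ε}·5) ∘ e^{−z}; i.e., p^z[ε] is the unique such affine symmetry. -/
open DualNumber

abbrev R12 := ZMod 12
abbrev DR := DualNumber R12

noncomputable def ι : R12 →+* DR := algebraMap R12 DR

def Kc : Set R12 := {0, 3, 4, 7, 8, 9}
def Dc : Set R12 := {1, 2, 5, 6, 10, 11}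

/-- `K[ε] = {r + kε : r ∈ ZMod 12, k ∈ K}`. -/
def Keps : Set DR := {x | ∃ r k, k ∈ Kc ∧ x = ι r + ι k * ε}
/-- `D[ε] = {r + kε : r ∈ ZMod 12, k ∈ D}`. -/
def Deps : Set DR := {x | ∃ r k, k ∈ Dc ∧ x = ι r + ι k * ε}

/-- The fiber `z + (ZMod 12)ε`. -/
def Fiber (z : R12) : Set DR := {x | ∃ y, x = ι z + ι y * ε}


private lemma snd_aff (c d u v r k : R12) :
    ((ι c + ι d * ε) * (ι r + ι k * ε) + (ι u + ι v * ε)).snd = c*k + d*r + v := by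
  simp only [ι, TrivSqZeroExt.algebraMap_eq_inl, TrivSqZeroExt.snd_add, DualNumber.snd_mul,
    TrivSqZeroExt.fst_add, TrivSqZeroExt.fst_mul, TrivSqZeroExt.fst_inl, TrivSqZeroExt.snd_inl,
    fst_eps, snd_eps]
  ring

private lemma fst_aff (c d u v r k : R12) :
    ((ι c + ι d * ε) * (ι r + ι k * ε) + (ι u + ι v * ε)).fst = c*r + u := by
  simp only [ι, TrivSqZeroExt.algebraMap_eq_inl, TrivSqZeroExt.snd_add, DualNumber.snd_mul,
    TrivSqZeroExt.fst_add, TrivSqZeroExt.fst_mul, TrivSqZeroExt.fst_inl, TrivSqZeroExt.snd_inl,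
    fst_eps, snd_eps]
  ring

private lemma snd_std (r k : R12) : (ι r + ι k * ε : DR).snd = k := by
  simp only [ι, TrivSqZeroExt.algebraMap_eq_inl, TrivSqZeroExt.snd_add, DualNumber.snd_mul,
    TrivSqZeroExt.fst_inl, TrivSqZeroExt.snd_inl, fst_eps, snd_eps]
  ring

private lemma fst_std (r k : R12) : (ι r + ι k * ε : DR).fst = r := by
  simp only [ι, TrivSqZeroExt.algebraMap_eq_inl, TrivSqZeroExt.fst_add, TrivSqZeroExt.fst_mul,
    TrivSqZeroExt.fst_inl, fst_eps]
  ring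

private lemma key : ∀ c d v : R12, IsUnit c →
    (∀ r k : R12, (k = 0 ∨ k = 3 ∨ k = 4 ∨ k = 7 ∨ k = 8 ∨ k = 9) →
      (c*k + d*r + v = 1 ∨ c*k + d*r + v = 2 ∨ c*k + d*r + v = 5 ∨
       c*k + d*r + v = 6 ∨ c*k + d*r + v = 10 ∨ c*k + d*r + v = 11)) →
    c = 5 ∧ d = 0 ∧ v = 2 := by decide

/-- Any affine symmetry `ξ ↦ (c+dε)ξ + (u+vε)` (with `c` a unit) that leaves
the fiber `z + (ZMod 12)ε` invariant and maps `K[ε]` onto `D[ε]` equals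
`p^z[ε] = e^z ∘ (e^{2ε}·5) ∘ e^{-z} : ξ ↦ 5ξ + 8z + 2ε`. -/
theorem stmt_7 (z c d u v : R12) (hc : IsUnit c)
    (hfib : (fun x : DR => (ι c + ι d * ε) * x + (ι u + ι v * ε)) '' Fiber z
              = Fiber z)
    (hKD : (fun x : DR => (ι c + ι d * ε) * x + (ι u + ι v * ε)) '' Keps
              = Deps) :
    ∀ x : DR, (ι c + ι d * ε) * x + (ι u + ι v * ε)
        = 5 * x + (ι (8 * z) + ι 2 * ε) := by
  have hKsub : ∀ r k : R12, (k = 0 ∨ k = 3 ∨ k = 4 ∨ k = 7 ∨ k = 8 ∨ k = 9) →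
      (c*k + d*r + v = 1 ∨ c*k + d*r + v = 2 ∨ c*k + d*r + v = 5 ∨
       c*k + d*r + v = 6 ∨ c*k + d*r + v = 10 ∨ c*k + d*r + v = 11) := by
    intro r k hk
    have hx : (ι r + ι k * ε : DR) ∈ Keps := ⟨r, k, by simpa [Kc] using hk, rfl⟩
    have hmem : (ι c + ι d * ε) * (ι r + ι k * ε) + (ι u + ι v * ε) ∈ Deps := by
      rw [← hKD]; exact ⟨_, hx, rfl⟩
    obtain ⟨r', k', hk', heq⟩ := hmem
    have hsnd := congrArg TrivSqZeroExt.snd heq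
    rw [snd_aff, snd_std] at hsnd
    simp only [Dc, Set.mem_insert_iff, Set.mem_singleton_iff] at hk'
    rw [hsnd]; exact hk'
  obtain ⟨hc5, hd0, hv2⟩ := key c d v hc hKsub
  have hz : (ι z : DR) ∈ Fiber z := ⟨0, by simp⟩
  have hmem : (ι c + ι d * ε) * (ι z) + (ι u + ι v * ε) ∈ Fiber z := by
    rw [← hfib]; exact ⟨_, hz, rfl⟩
  obtain ⟨y, heq⟩ := hmem
  have heq' : (ι c + ι d * ε) * (ι z + ι 0 * ε) + (ι u + ι v * ε)
      = ι z + ι y * ε := by simpa using heq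
  have hfst := congrArg TrivSqZeroExt.fst heq'
  rw [fst_aff, fst_std] at hfst
  rw [hc5] at hfst
  have h12 : (12 : R12) * z = 0 := by
    have : (12 : R12) = 0 := by decide
    rw [this, zero_mul]
  have hu : u = 8 * z := by linear_combination hfst - h12
  intro x
  have h5 : (ι 5 : DR) = 5 := map_ofNat ι 5
  rw [hc5, hd0, hv2, hu, map_zero, zero_mul, add_zero, h5]
end

section
/- The affine symmetry p^z[ε] = e^{8z + 2ε}·5 of the dual numbers Z/12[ε] maps the set z + Kε = {z + kε : k ∈ K} onto z + Dε = {z + kε : k ∈ D}. -/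
open DualNumber

lemma key_s8 (z k : R12) :
    5 * (ι z + ι k * ε) + (ι (8 * z) + ι 2 * ε) = ι z + ι (5 * k + 2) * ε := by
  apply TrivSqZeroExt.ext <;>
    simp [ι, TrivSqZeroExt.algebraMap_eq_inl, show ((5:DR).fst = 5) from rfl,
      show ((5:DR).snd = 0) from rfl] <;>
  · ring_nf
    rw [show (13:R12) = 1 by decide]
    ring

/-- The affine symmetry `p^z[ε] : ξ ↦ 5ξ + (8z + 2ε)` of `ZMod 12[ε]`
maps `z + Kε` onto `z + Dε`. -/
theorem stmt_8 (z : R12) :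
    (fun x : DR => 5 * x + (ι (8 * z) + ι 2 * ε))
        '' {x | ∃ k ∈ Kc, x = ι z + ι k * ε}
      = {x | ∃ k ∈ Dc, x = ι z + ι k * ε} := by
  ext x
  simp only [Set.mem_image, Set.mem_setOf_eq]
  constructor
  · rintro ⟨y, ⟨k, hk, rfl⟩, rfl⟩
    refine ⟨5 * k + 2, ?_, key_s8 z k⟩
    rcases hk with rfl | rfl | rfl | rfl | rfl | rfl <;> simp [Dc] <;> decide
  · rintro ⟨k, hk, rfl⟩
    refine ⟨ι z + ι (5 * k + 2) * ε, ⟨5 * k + 2, ?_, rfl⟩, ?_⟩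
    · rcases hk with rfl | rfl | rfl | rfl | rfl | rfl <;> simp [Kc] <;> decide
    · rw [key_s8]
      have : 5 * (5 * k + 2) + 2 = k := by
        ring_nf
        rw [show (25:R12) = 1 by decide, show (12:R12) = 0 by decide]
        ring
      rw [this]
end

section
/- A progression (ξ, η) of elements of Z/12[ε] is polarized (i.e., there exists an affine symmetry g of Z/12[ε] with ξ ∈ g(D[ε]) and η ∈ g(K[ε])) if and only if ξ ≠ η. -/
open DualNumber

lemma fst_mk (r k : R12) : (ι r + ι k * ε).fst = r := by
  simp [ι, TrivSqZeroExt.algebraMap_eq_inl]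

lemma snd_mk (r k : R12) : (ι r + ι k * ε).snd = k := by
  simp [ι, TrivSqZeroExt.algebraMap_eq_inl]

lemma mk_eq (x : DR) : x = ι x.fst + ι x.snd * ε :=
  TrivSqZeroExt.ext (fst_mk _ _).symm (snd_mk _ _).symm

lemma mk_inj {a b a' b' : R12} (h : ι a + ι b * ε = ι a' + ι b' * ε) :
    a = a' ∧ b = b' := by
  constructor
  · simpa [fst_mk, ι, TrivSqZeroExt.algebraMap_eq_inl] using congrArg TrivSqZeroExt.fst h
  · have h2 := congrArg TrivSqZeroExt.snd h
    rwa [snd_mk, snd_mk] at h2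

lemma g_apply (c d u v r k : R12) :
    (ι c + ι d * ε) * (ι r + ι k * ε) + (ι u + ι v * ε)
      = ι (c*r+u) + ι (c*k + d*r + v) * ε := by
  apply TrivSqZeroExt.ext <;>
    simp [ι, TrivSqZeroExt.algebraMap_eq_inl, mul_comm]

lemma key_s13 : ∀ t : R12, t ≠ 0 → ∃ k k' : R12,
    (k = 1 ∨ k = 2 ∨ k = 5 ∨ k = 6 ∨ k = 10 ∨ k = 11) ∧
    (k' = 0 ∨ k' = 3 ∨ k' = 4 ∨ k' = 7 ∨ k' = 8 ∨ k' = 9) ∧ k - k' = t := by decide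

lemma disj : ∀ k : R12, (k = 1 ∨ k = 2 ∨ k = 5 ∨ k = 6 ∨ k = 10 ∨ k = 11) →
    (k = 0 ∨ k = 3 ∨ k = 4 ∨ k = 7 ∨ k = 8 ∨ k = 9) → False := by decide

lemma mem_Dc_iff (k : R12) :
    k ∈ Dc ↔ (k = 1 ∨ k = 2 ∨ k = 5 ∨ k = 6 ∨ k = 10 ∨ k = 11) := by
  simp [Dc]

lemma mem_Kc_iff (k : R12) :
    k ∈ Kc ↔ (k = 0 ∨ k = 3 ∨ k = 4 ∨ k = 7 ∨ k = 8 ∨ k = 9) := by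
  simp [Kc]

/-- A progression `(ξ, η)` in `ZMod 12[ε]` is polarized (there is an affine
symmetry `g` with `ξ ∈ g(D[ε])` and `η ∈ g(K[ε])`) iff `ξ ≠ η`. -/
theorem stmt_13 (ξ η : DR) :
    (∃ c d u v : R12, IsUnit c ∧
        ξ ∈ (fun x : DR => (ι c + ι d * ε) * x + (ι u + ι v * ε)) '' Deps ∧
        η ∈ (fun x : DR => (ι c + ι d * ε) * x + (ι u + ι v * ε)) '' Keps)
      ↔ ξ ≠ η := by
  constructor
  · rintro ⟨c, d, u, v, hc, ⟨x, ⟨r, k, hk, rfl⟩, hx⟩, ⟨y, ⟨r', k', hk', rfl⟩, hy⟩⟩ heq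
    rw [heq] at hx
    have h := hx.trans hy.symm
    simp only [g_apply] at h
    obtain ⟨h1, h2⟩ := mk_inj h
    have hr : r = r' := by
      have : c * r = c * r' := by linear_combination h1
      exact hc.mul_left_cancel this
    have hkk : k = k' := by
      have : c * k = c * k' := by
        subst hr; linear_combination h2
      exact hc.mul_left_cancel this
    exact disj k ((mem_Dc_iff k).mp hk) ((mem_Kc_iff k).mp (hkk ▸ hk'))
  · intro hne
    set a := ξ.fst; set b := ξ.snd; set a' := η.fst; set b' := η.snd
    set d : R12 := if b = b' then 1 else 0 with hd
    have ht : b - b' - d * (a - a') ≠ 0 := by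
      by_cases hb : b = b'
      · rw [hd, if_pos hb, one_mul, hb, sub_self, zero_sub, neg_ne_zero,
          sub_ne_zero]
        intro ha
        exact hne (TrivSqZeroExt.ext ha hb)
      · rw [hd, if_neg hb, zero_mul, sub_zero, sub_ne_zero]
        exact hb
    obtain ⟨k, k', hk, hk', hkk⟩ := key_s13 _ ht
    refine ⟨1, d, a', b' - k', isUnit_one, ?_, ?_⟩
    · refine ⟨ι (a - a') + ι k * ε, ⟨a - a', k, (mem_Dc_iff k).mpr hk, rfl⟩, ?_⟩
      show (ι 1 + ι d * ε) * (ι (a - a') + ι k * ε) + (ι a' + ι (b' - k') * ε) = ξ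
      rw [g_apply]
      apply TrivSqZeroExt.ext
      · rw [fst_mk]; ring
      · rw [snd_mk]; linear_combination hkk
    · refine ⟨ι 0 + ι k' * ε, ⟨0, k', (mem_Kc_iff k').mpr hk', rfl⟩, ?_⟩
      show (ι 1 + ι d * ε) * (ι 0 + ι k' * ε) + (ι a' + ι (b' - k') * ε) = η
      rw [g_apply]
      apply TrivSqZeroExt.ext
      · rw [fst_mk]; ring
      · rw [snd_mk]; ring
end
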